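/- Let (R, m, k) be an F-finite Noetherian local ring of prime characteristic p > 0 and let θ : F^e_* R → R be a surjective R-linear map for some e ≥ 1. Then the collection 𝒬 of θ-compatible prime ideals of R forms an intersection compatible system: the set of all finite intersections of θ-compatible primes is closed under finite sums; in particular, any finite sum of finite intersections of θ-compatible prime ideals is a radical ideal equal to a finite intersection of θ-compatible prime ideals. -/

import Mathlib

open IsLocalRing TensorProduct

universe u

section Defs

variable (R : Type u) [CommRing R]

/-- The embedding dimension of a Noetherian local ring: `dim_k (m/m²)`. -/
noncomputable def embDim [IsLocalRing R] : ℕ :=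
  Module.finrank (ResidueField R) (CotangentSpace R)

/-- A Noetherian local ring is regular if its embedding dimension equals its Krull dimension. -/
def IsRegularLocal [IsLocalRing R] : Prop :=
  IsNoetherianRing R ∧ (embDim R : WithBot ℕ∞) = ringKrullDim R

/-- A (not necessarily local) commutative ring is regular if it is Noetherian and all of its
localizations at primes are regular local rings. -/
def IsRegularRing' : Prop :=
  IsNoetherianRing R ∧ ∀ (p : Ideal R) (_ : p.IsPrime), IsRegularLocal (Localization.AtPrime p)

/-- An algebra `A` over a field `k` is geometrically regular if `L ⊗ₖ A` is a regular ring for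
every finite field extension `L` of `k`. -/
def IsGeomRegularAlgebra (k : Type u) (A : Type u) [Field k] [CommRing A] [Algebra k A] : Prop :=
  ∀ (L : Type u) [Field L] [Algebra k L], Module.Finite k L → IsRegularRing' (L ⊗[k] A)

/-- A chain of primes is saturated if each step is a covering relation. -/
def IsSaturatedChain {α : Type u} [Preorder α] (c : LTSeries α) : Prop :=
  ∀ i : Fin c.length, c.toFun i.castSucc ⋖ c.toFun i.succ

/-- A ring is catenary if any two saturated chains of primes with the same endpoints have the
same length. -/
def IsCatenary : Prop :=
  ∀ c₁ c₂ : LTSeries (PrimeSpectrum R), c₁.head = c₂.head → c₁.last = c₂.last →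
    IsSaturatedChain c₁ → IsSaturatedChain c₂ → c₁.length = c₂.length

/-- A ring is universally catenary if every finite type algebra over it is catenary. -/
def IsUniversallyCatenary : Prop :=
  ∀ (S : Type u) [CommRing S] [Algebra R S], Algebra.FiniteType R S → IsCatenary S

/-- The residue field of a ring at a prime ideal. -/
abbrev residueFieldAt (q : Ideal R) [q.IsPrime] : Type u :=
  ResidueField (Localization.AtPrime q)

/-- A ring is a G-ring if, for every prime `p`, the formal fibers of `R_p` (the fibers of the
map from `R_p` to its `maximal-adic` completion, over the primes `q ⊆ p` of `R`) are
geometrically regular over the residue fields `κ(q)`. -/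
def IsGRing : Prop :=
  ∀ (p : Ideal R) (_ : p.IsPrime) (q : Ideal R) (_ : q.IsPrime), q ≤ p →
    letI Rp := Localization.AtPrime p
    letI Rphat := AdicCompletion (maximalIdeal Rp) Rp
    letI iA : Algebra R Rphat :=
      ((algebraMap Rp Rphat).comp (algebraMap R Rp)).toAlgebra
    letI iB : Algebra R (residueFieldAt R q) :=
      ((algebraMap (Localization.AtPrime q) (residueFieldAt R q)).comp
        (algebraMap R (Localization.AtPrime q))).toAlgebra
    IsGeomRegularAlgebra (residueFieldAt R q)
      (@TensorProduct R _ (residueFieldAt R q) Rphat _ _ iB.toModule iA.toModule)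

/-- A ring is J-2 if the regular locus of every finite type algebra over it is open. -/
def IsJ2 : Prop :=
  ∀ (S : Type u) [CommRing S] [Algebra R S], Algebra.FiniteType R S →
    IsOpen {p : PrimeSpectrum S | IsRegularLocal (Localization.AtPrime p.asIdeal)}

/-- A ring is excellent if it is Noetherian, universally catenary, a G-ring, and J-2. -/
def IsExcellentRing : Prop :=
  IsNoetherianRing R ∧ IsUniversallyCatenary R ∧ IsGRing R ∧ IsJ2 R

/-- A proper ideal of a local ring is equidimensional if all of its minimal primes have the same
coheight. -/
def IsEquidimensionalIdeal (Q : Ideal R) : Prop :=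
  ∀ P ∈ Q.minimalPrimes, ringKrullDim (R ⧸ P) = ringKrullDim (R ⧸ Q)

/-- A set of ideals of a local ring is a pseudo-prime system if each of its members is a proper
radical equidimensional ideal, and whenever some minimal prime of one member is contained in a
minimal prime of another, the first member is contained in the second. -/
def IsPseudoPrimeSystem (𝒬 : Set (Ideal R)) : Prop :=
  (∀ Q ∈ 𝒬, Q ≠ ⊤ ∧ Q.IsRadical ∧ IsEquidimensionalIdeal R Q) ∧
    ∀ Q₁ ∈ 𝒬, ∀ Q₂ ∈ 𝒬,
      (∃ P₁ ∈ Q₁.minimalPrimes, ∃ P₂ ∈ Q₂.minimalPrimes, P₁ ≤ P₂) → Q₁ ≤ Q₂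

/-- `e(R, 𝒬, d)`: the number of ideals in `𝒬` of coheight `d`. -/
noncomputable def sysCount (𝒬 : Set (Ideal R)) (d : ℕ) : ℕ :=
  {Q ∈ 𝒬 | ringKrullDim (R ⧸ Q) = (d : WithBot ℕ∞)}.ncard

/-- The set of all intersections of finite nonempty subcollections of `𝒬`. -/
def finiteIntersections (𝒬 : Set (Ideal R)) : Set (Ideal R) :=
  {I | ∃ α : Finset (Ideal R), α.Nonempty ∧ ↑α ⊆ 𝒬 ∧ I = α.inf id}

/-- A pseudo-prime system `𝒬` is intersection compatible if the set of intersections of finite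
nonempty subcollections of `𝒬` is closed under (finite) sums. -/
def IsIntersectionCompatible (𝒬 : Set (Ideal R)) : Prop :=
  ∀ I ∈ finiteIntersections R 𝒬, ∀ J ∈ finiteIntersections R 𝒬,
    I + J ∈ finiteIntersections R 𝒬

end Defs

section Frobenius

/-- An additive map `θ : R → R` is `R`-linear as a map `F^e_* R → R` if
`θ(r^{p^e} x) = r θ(x)` for all `r, x`. -/
def IsPeLinearMap (R : Type u) [CommRing R] (p e : ℕ) (θ : R →+ R) : Prop :=
  ∀ r x : R, θ (r ^ p ^ e * x) = r * θ x

/-- A ring `R` of characteristic `p` is `F`-finite if `F^1_* R` is a finitely generated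
`R`-module, i.e. there exist finitely many elements `a ∈ s` such that every `x ∈ R` is of the
form `x = Σ_{a ∈ s} (c a)^p * a`. -/
def IsFFinite (R : Type u) [CommRing R] (p : ℕ) : Prop :=
  ∃ s : Finset R, ∀ x : R, ∃ c : R → R, x = ∑ a ∈ s, c a ^ p * a

end Frobenius

/-!
Writing `1 = θ y`, compatibility of `Q` with `θ` gives `x = θ (x ^ p ^ e * y) ∈ Q` as soon as
`x ^ p ^ e ∈ Q`, so every `θ`-compatible ideal is radical. Compatibility passes to sums and
intersections, and to minimal primes of a radical compatible ideal `Q`: if `a ∉ P` kills `P`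
modulo `Q`, then `a θ x = θ (a ^ p ^ e x) ∈ Q ⊆ P` for `x ∈ P`. Hence a sum `I + J` of
finite intersections of compatible primes is compatible, radical and proper (the ring is
local), so it is the intersection of its finitely many minimal primes, all of them compatible.
-/

section Compatible

variable {R : Type u} [CommRing R]

def Ideal.IsCompatible (θ : R →+ R) (Q : Ideal R) : Prop :=
  ∀ x ∈ Q, θ x ∈ Q

namespace Ideal.IsCompatible

variable {θ : R →+ R} {I J Q : Ideal R}

theorem sup (hI : I.IsCompatible θ) (hJ : J.IsCompatible θ) : (I ⊔ J).IsCompatible θ := by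
  intro x hx
  obtain ⟨a, ha, b, hb, rfl⟩ := Submodule.mem_sup.mp hx
  rw [map_add]
  exact Submodule.add_mem_sup (hI a ha) (hJ b hb)

theorem sInf {S : Set (Ideal R)} (hS : ∀ Q ∈ S, Q.IsCompatible θ) :
    (sInf S).IsCompatible θ := by
  intro x hx
  rw [Submodule.mem_sInf] at hx ⊢
  exact fun Q hQ => hS Q hQ x (hx Q hQ)

theorem isRadical {p e : ℕ} (hθ : IsPeLinearMap R p e θ) (hpe : 1 < p ^ e)
    (hsurj : Function.Surjective θ) (hQ : Q.IsCompatible θ) : Q.IsRadical := by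
  rw [Ideal.isRadical_iff_pow_one_lt (p ^ e) hpe]
  intro x hx
  obtain ⟨y, hy⟩ := hsurj 1
  simpa only [hθ x y, hy, mul_one] using hQ _ (Q.mul_mem_right y hx)

end Ideal.IsCompatible

/-- Prime avoidance against the other minimal primes of `Q` provides the element `a`. -/
theorem Ideal.IsRadical.exists_notMem_forall_mul_mem_of_mem_minimalPrimes [IsNoetherianRing R]
    {Q P : Ideal R} (hQ : Q.IsRadical) (hP : P ∈ Q.minimalPrimes) :
    ∃ a ∉ P, ∀ x ∈ P, a * x ∈ Q := by
  classical
  have hfin : (Q.minimalPrimes \ {P}).Finite :=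
    (Q.finite_minimalPrimes_of_isNoetherianRing R).sdiff
  set J := hfin.toFinset.inf id
  have hJP : ¬ J ≤ P := by
    rw [hP.isPrime.inf_le']
    rintro ⟨P', hP', hle⟩
    obtain ⟨hP'min, hne⟩ := hfin.mem_toFinset.mp hP'
    exact hne (le_antisymm hle (hP.2 hP'min.1 hle))
  obtain ⟨a, haJ, haP⟩ := SetLike.not_le_iff_exists.mp hJP
  refine ⟨a, haP, fun x hx => ?_⟩
  rw [← hQ.radical, ← Ideal.sInf_minimalPrimes, Submodule.mem_sInf]
  intro P' hP'
  by_cases h : P' = P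
  · exact h ▸ P.mul_mem_left a hx
  · have hJP' : J ≤ P' := Finset.inf_le (f := id) (hfin.mem_toFinset.mpr ⟨hP', h⟩)
    exact Ideal.mul_mem_right x P' (hJP' haJ)

theorem Ideal.IsCompatible.of_mem_minimalPrimes [IsNoetherianRing R] {θ : R →+ R} {p e : ℕ}
    (hθ : IsPeLinearMap R p e θ) (hpe : p ^ e ≠ 0) {Q P : Ideal R} (hQ : Q.IsCompatible θ)
    (hQrad : Q.IsRadical) (hP : P ∈ Q.minimalPrimes) : P.IsCompatible θ := by
  obtain ⟨a, haP, ha⟩ := hQrad.exists_notMem_forall_mul_mem_of_mem_minimalPrimes hP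
  intro x hx
  have hmem : a ^ p ^ e * x ∈ Q := by
    rw [← pow_sub_one_mul hpe, mul_assoc, mul_left_comm]
    exact ha _ (P.mul_mem_left _ hx)
  have hθmem : a * θ x ∈ P := hθ a x ▸ hP.1.2 (hQ _ hmem)
  exact (hP.isPrime.mem_or_mem hθmem).resolve_left haP

section finiteIntersections

variable (R)

theorem finiteIntersections_mono {𝒬 𝒬' : Set (Ideal R)} (h : 𝒬 ⊆ 𝒬') :
    finiteIntersections R 𝒬 ⊆ finiteIntersections R 𝒬' := by
  rintro I ⟨α, hne, hα, rfl⟩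
  exact ⟨α, hne, hα.trans h, rfl⟩

variable {R}

theorem Ideal.IsRadical.mem_finiteIntersections_minimalPrimes [IsNoetherianRing R] {Q : Ideal R}
    (hQ : Q.IsRadical) (hQtop : Q ≠ ⊤) : Q ∈ finiteIntersections R Q.minimalPrimes := by
  have hfin := Q.finite_minimalPrimes_of_isNoetherianRing R
  refine ⟨hfin.toFinset, ?_, by simp, ?_⟩
  · obtain ⟨P, hP⟩ := Q.nonempty_minimalPrimes hQtop
    exact ⟨P, hfin.mem_toFinset.mpr hP⟩
  · rw [Finset.inf_id_eq_sInf, hfin.coe_toFinset, Ideal.sInf_minimalPrimes, hQ.radical]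

theorem Ideal.IsCompatible.of_mem_finiteIntersections {θ : R →+ R} {𝒬 : Set (Ideal R)}
    (h𝒬 : ∀ Q ∈ 𝒬, Q.IsCompatible θ) {I : Ideal R} (hI : I ∈ finiteIntersections R 𝒬) :
    I.IsCompatible θ := by
  obtain ⟨α, -, hα, rfl⟩ := hI
  rw [Finset.inf_id_eq_sInf]
  exact Ideal.IsCompatible.sInf fun Q hQ => h𝒬 Q (hα hQ)

theorem ne_top_of_mem_finiteIntersections {𝒬 : Set (Ideal R)} (h𝒬 : ∀ Q ∈ 𝒬, Q ≠ ⊤)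
    {I : Ideal R} (hI : I ∈ finiteIntersections R 𝒬) : I ≠ ⊤ := by
  obtain ⟨α, ⟨Q, hQ⟩, hα, rfl⟩ := hI
  exact ne_top_of_le_ne_top (h𝒬 Q (hα hQ)) (Finset.inf_le hQ)

end finiteIntersections

end Compatible

theorem compatiblePrimes_isIntersectionCompatible_general (R : Type u) [CommRing R]
    [IsNoetherianRing R] [IsLocalRing R] (p : ℕ) [Fact p.Prime]
    (e : ℕ) (he : 1 ≤ e) (θ : R →+ R) (hθ : IsPeLinearMap R p e θ)
    (hsurj : Function.Surjective θ) :
    IsIntersectionCompatible R {Q : Ideal R | Q.IsPrime ∧ ∀ x ∈ Q, θ x ∈ Q} ∧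
    ∀ I ∈ finiteIntersections R {Q : Ideal R | Q.IsPrime ∧ ∀ x ∈ Q, θ x ∈ Q},
      ∀ J ∈ finiteIntersections R {Q : Ideal R | Q.IsPrime ∧ ∀ x ∈ Q, θ x ∈ Q},
        (I + J).IsRadical ∧
          I + J ∈ finiteIntersections R {Q : Ideal R | Q.IsPrime ∧ ∀ x ∈ Q, θ x ∈ Q} := by
  set 𝒬 := {Q : Ideal R | Q.IsPrime ∧ ∀ x ∈ Q, θ x ∈ Q}
  suffices key : ∀ I ∈ finiteIntersections R 𝒬, ∀ J ∈ finiteIntersections R 𝒬,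
      (I + J).IsRadical ∧ I + J ∈ finiteIntersections R 𝒬 from
    ⟨fun I hI J hJ => (key I hI J hJ).2, key⟩
  intro I hI J hJ
  have hproper : ∀ K ∈ finiteIntersections R 𝒬, K ≤ maximalIdeal R := fun K hK =>
    le_maximalIdeal (ne_top_of_mem_finiteIntersections (fun Q hQ => hQ.1.ne_top) hK)
  have htop : I ⊔ J ≠ ⊤ :=
    ne_top_of_le_ne_top (maximalIdeal.isMaximal R).ne_top (sup_le (hproper I hI) (hproper J hJ))
  have hcompat : (I ⊔ J).IsCompatible θ :=
    (Ideal.IsCompatible.of_mem_finiteIntersections (fun Q hQ => hQ.2) hI).sup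
      (Ideal.IsCompatible.of_mem_finiteIntersections (fun Q hQ => hQ.2) hJ)
  have hpe : 1 < p ^ e := Nat.one_lt_pow (by omega) (Fact.out : p.Prime).one_lt
  have hrad : (I ⊔ J).IsRadical := hcompat.isRadical hθ hpe hsurj
  refine ⟨hrad, finiteIntersections_mono R ?_ (hrad.mem_finiteIntersections_minimalPrimes htop)⟩
  exact fun P hP => ⟨hP.isPrime, hcompat.of_mem_minimalPrimes hθ (by omega) hrad hP⟩

/-- For a surjective `R`-linear map `θ : F^e_* R → R` on an `F`-finite Noetherian local ring of
characteristic `p > 0`, the `θ`-compatible prime ideals form an intersection compatible system;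
in particular any finite sum of finite intersections of `θ`-compatible primes is a radical
ideal which is again a finite intersection of `θ`-compatible primes. -/
theorem compatiblePrimes_isIntersectionCompatible (R : Type u) [CommRing R]
    [IsNoetherianRing R] [IsLocalRing R] (p : ℕ) [Fact p.Prime] [CharP R p]
    (hFf : IsFFinite R p) (e : ℕ) (he : 1 ≤ e) (θ : R →+ R) (hθ : IsPeLinearMap R p e θ)
    (hsurj : Function.Surjective θ) :
    IsIntersectionCompatible R {Q : Ideal R | Q.IsPrime ∧ ∀ x ∈ Q, θ x ∈ Q} ∧
    ∀ I ∈ finiteIntersections R {Q : Ideal R | Q.IsPrime ∧ ∀ x ∈ Q, θ x ∈ Q},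
      ∀ J ∈ finiteIntersections R {Q : Ideal R | Q.IsPrime ∧ ∀ x ∈ Q, θ x ∈ Q},
        (I + J).IsRadical ∧
          I + J ∈ finiteIntersections R {Q : Ideal R | Q.IsPrime ∧ ∀ x ∈ Q, θ x ∈ Q} :=
  compatiblePrimes_isIntersectionCompatible_general R p e he θ hθ hsurj
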